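/- arXiv:1905.04955 — 2 statements merged into one kernel-verified Lean document; each statement's English description precedes it below -/
import Mathlib

section
/- If a random variable X satisfies the tail bound P(|X| ≥ x) ≤ 2·exp(−(x/K)^{1/θ}) for all x ≥ 0, where K > 0 and θ > 0, then there exists a constant C > 0 such that the moment bound (E[|X|^k])^{1/k} ≤ C·k^θ holds for all real k ≥ 1. -/
/-!
By the layer-cake formula, `E|X|^k = k ∫₀^∞ t^(k-1) P(|X| ≥ t) dt`, and the tail bound turns the
right-hand side into a Gamma integral: `E|X|^k ≤ 2 K^k Γ(kθ + 1)`. Log-convexity of `Γ` gives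
`Γ(s + 1) ≤ (s + 1)^s`, hence `Γ(kθ + 1) ≤ ((1 + θ) k)^(kθ)`, and taking `k`-th roots yields
`‖X‖_k ≤ 2 K (1 + θ)^θ k^θ`.
-/

open MeasureTheory Real Set

namespace Real

theorem Gamma_add_one_le_natCast_rpow {s : ℝ} {n : ℕ} (hs : 0 ≤ s) (hsn : s < n) :
    Gamma (s + 1) ≤ (n : ℝ) ^ s := by
  rcases hs.eq_or_lt with rfl | hs
  · simp
  have hn : (0 : ℝ) < n := hs.trans hsn
  -- `s + 1 = (1 - s / n) * 1 + (s / n) * (n + 1)`, and `Gamma` is log-convex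
  have hconv := Gamma_mul_add_mul_le_rpow_Gamma_mul_rpow_Gamma one_pos
    (by positivity : (0 : ℝ) < n + 1) (sub_pos.2 ((div_lt_one hn).2 hsn)) (div_pos hs hn)
    (sub_add_cancel 1 (s / n))
  have hcomb : (1 - s / n) * 1 + s / n * (n + 1) = s + 1 := by field_simp; ring
  rw [hcomb, Gamma_one, one_rpow, one_mul, Gamma_nat_eq_factorial] at hconv
  calc Gamma (s + 1) ≤ ((n.factorial : ℕ) : ℝ) ^ (s / n) := hconv
    _ ≤ ((n : ℝ) ^ (n : ℝ)) ^ (s / n) := by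
      gcongr
      exact_mod_cast Nat.factorial_le_pow n
    _ = (n : ℝ) ^ s := by rw [← rpow_mul hn.le, mul_div_cancel₀ s hn.ne']

theorem Gamma_add_one_le_add_one_rpow {s : ℝ} (hs : 0 ≤ s) : Gamma (s + 1) ≤ (s + 1) ^ s :=
  calc Gamma (s + 1) ≤ ((⌊s⌋₊ + 1 : ℕ) : ℝ) ^ s :=
        Gamma_add_one_le_natCast_rpow hs (by exact_mod_cast Nat.lt_floor_add_one s)
    _ ≤ (s + 1) ^ s := by
        gcongr
        push_cast
        linarith [Nat.floor_le hs]

theorem mul_rpow_mul_Gamma_mul_add_one_le_rpow {c K θ k : ℝ} (hc : 1 ≤ c) (hK : 0 < K)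
    (hθ : 0 < θ) (hk : 1 ≤ k) :
    c * K ^ k * Gamma (k * θ + 1) ≤ (c * K * (1 + θ) ^ θ * k ^ θ) ^ k := by
  have hk0 : 0 < k := one_pos.trans_le hk
  have hGamma : Gamma (k * θ + 1) ≤ (((1 + θ) * k) ^ θ) ^ k :=
    calc Gamma (k * θ + 1) ≤ (k * θ + 1) ^ (k * θ) := Gamma_add_one_le_add_one_rpow (by positivity)
      _ ≤ ((1 + θ) * k) ^ (k * θ) := by gcongr; nlinarith
      _ = (((1 + θ) * k) ^ θ) ^ k := by rw [← rpow_mul (by positivity), mul_comm k]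
  calc c * K ^ k * Gamma (k * θ + 1) ≤ c ^ k * K ^ k * (((1 + θ) * k) ^ θ) ^ k := by
        gcongr
        exact self_le_rpow_of_one_le hc hk
    _ = (c * K * (1 + θ) ^ θ * k ^ θ) ^ k := by
        rw [← mul_rpow (by positivity) (by positivity), ← mul_rpow (by positivity) (by positivity),
          mul_rpow (by positivity) hk0.le, mul_assoc (c * K)]

theorem div_rpow_eq_inv_rpow_mul {t K p : ℝ} (ht : 0 ≤ t) (hK : 0 ≤ K) :
    (t / K) ^ p = (K ^ p)⁻¹ * t ^ p := by
  rw [div_rpow ht hK, div_eq_inv_mul]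

theorem integrableOn_rpow_mul_exp_neg_div_rpow {p q K : ℝ} (hp : 0 < p) (hq : -1 < q)
    (hK : 0 < K) : IntegrableOn (fun t : ℝ ↦ t ^ q * exp (-(t / K) ^ p)) (Ioi 0) := by
  refine (integrableOn_rpow_mul_exp_neg_mul_rpow hq hp (inv_pos.2 (rpow_pos_of_pos hK p))).congr_fun
    (fun t ht ↦ ?_) measurableSet_Ioi
  simp only [div_rpow_eq_inv_rpow_mul (le_of_lt ht) hK.le, neg_mul]

theorem integral_rpow_mul_exp_neg_div_rpow {p q K : ℝ} (hp : 0 < p) (hq : -1 < q) (hK : 0 < K) :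
    ∫ t in Ioi (0 : ℝ), t ^ q * exp (-(t / K) ^ p) = K ^ (q + 1) / p * Gamma ((q + 1) / p) := by
  have hKp : 0 < K ^ p := rpow_pos_of_pos hK p
  calc ∫ t in Ioi (0 : ℝ), t ^ q * exp (-(t / K) ^ p)
      = ∫ t in Ioi (0 : ℝ), t ^ q * exp (-(K ^ p)⁻¹ * t ^ p) :=
        setIntegral_congr_fun measurableSet_Ioi fun t ht ↦ by
          simp only [div_rpow_eq_inv_rpow_mul (le_of_lt ht) hK.le, neg_mul]
    _ = ((K ^ p)⁻¹) ^ (-(q + 1) / p) * (1 / p) * Gamma ((q + 1) / p) :=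
        integral_rpow_mul_exp_neg_mul_rpow hp hq (inv_pos.2 hKp)
    _ = K ^ (q + 1) / p * Gamma ((q + 1) / p) := by
        rw [inv_rpow hKp.le, ← rpow_neg hKp.le, ← rpow_mul hK.le]
        field_simp

end Real

theorem lintegral_rpow_le_of_meas_le_exp_neg_div_rpow {α : Type*} [MeasurableSpace α]
    {μ : Measure α} {f : α → ℝ} (hf_nn : 0 ≤ᵐ[μ] f) (hf : AEMeasurable f μ) {c K p k : ℝ}
    (hK : 0 < K) (hp : 0 < p) (hk : 0 < k)
    (htail : ∀ t, 0 < t → μ {a | t ≤ f a} ≤ ENNReal.ofReal (c * exp (-(t / K) ^ p))) :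
    ∫⁻ a, ENNReal.ofReal (f a ^ k) ∂μ ≤ ENNReal.ofReal (c * K ^ k * Gamma (k / p + 1)) := by
  set g : ℝ → ℝ := fun t ↦ t ^ (k - 1) * exp (-(t / K) ^ p)
  have hg_int : IntegrableOn g (Ioi 0) :=
    integrableOn_rpow_mul_exp_neg_div_rpow hp (by linarith) hK
  have hg_nn : 0 ≤ᵐ[volume.restrict (Ioi 0)] g :=
    (ae_restrict_iff' measurableSet_Ioi).2 <| ae_of_all _ fun t ht ↦
      mul_nonneg (rpow_nonneg (le_of_lt ht) _) (exp_pos _).le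
  have hg_val : ∫ t in Ioi 0, g t = K ^ k / p * Gamma (k / p) := by
    rw [integral_rpow_mul_exp_neg_div_rpow hp (by linarith) hK, sub_add_cancel]
  rw [lintegral_rpow_eq_lintegral_meas_le_mul μ hf_nn hf hk]
  calc ENNReal.ofReal k * ∫⁻ t in Ioi 0, μ {a | t ≤ f a} * ENNReal.ofReal (t ^ (k - 1))
      ≤ ENNReal.ofReal k * ∫⁻ t in Ioi 0, ENNReal.ofReal c * ENNReal.ofReal (g t) := by
        gcongr ENNReal.ofReal k * ?_
        refine setLIntegral_mono' measurableSet_Ioi fun t ht ↦ ?_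
        have ht_pow : 0 ≤ t ^ (k - 1) := rpow_nonneg (le_of_lt ht) _
        calc μ {a | t ≤ f a} * ENNReal.ofReal (t ^ (k - 1))
            ≤ ENNReal.ofReal (c * exp (-(t / K) ^ p)) * ENNReal.ofReal (t ^ (k - 1)) := by
              gcongr
              exact htail t ht
          _ = ENNReal.ofReal c * ENNReal.ofReal (g t) := by
              rw [← ENNReal.ofReal_mul' ht_pow, ← ENNReal.ofReal_mul' (by positivity), mul_assoc,
                mul_comm (exp _)]
    _ = ENNReal.ofReal (k * (c * ∫ t in Ioi 0, g t)) := by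
        rw [lintegral_const_mul' _ _ ENNReal.ofReal_ne_top, ← ofReal_integral_eq_lintegral_ofReal
          hg_int hg_nn, ← ENNReal.ofReal_mul' (integral_nonneg_of_ae hg_nn),
          ← ENNReal.ofReal_mul hk.le]
    _ = ENNReal.ofReal (c * K ^ k * Gamma (k / p + 1)) := by
        rw [hg_val, Gamma_add_one (div_pos hk hp).ne']
        field_simp

theorem tail_implies_moments_general {Ω : Type*} [MeasurableSpace Ω] (μ : Measure Ω)
    (X : Ω → ℝ) (hX : Measurable X)
    (K θ : ℝ) (hK : 0 < K) (hθ : 0 < θ)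
    (h : ∀ x : ℝ, 0 ≤ x → μ {ω | x ≤ |X ω|} ≤ ENNReal.ofReal (2 * Real.exp (-(x / K) ^ (1 / θ)))) :
    ∃ C : ℝ, 0 < C ∧ ∀ k : ℝ, 1 ≤ k →
      (∫⁻ ω, ENNReal.ofReal (|X ω| ^ k) ∂μ) ^ (1 / k) ≤ ENNReal.ofReal (C * k ^ θ) := by
  refine ⟨2 * K * (1 + θ) ^ θ, by positivity, fun k hk ↦ ?_⟩
  have hk0 : 0 < k := one_pos.trans_le hk
  have hmoment := lintegral_rpow_le_of_meas_le_exp_neg_div_rpow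
    (ae_of_all μ fun ω ↦ abs_nonneg (X ω)) hX.abs.aemeasurable hK (one_div_pos.2 hθ) hk0
    fun t ht ↦ h t ht.le
  rw [div_div_eq_mul_div, div_one] at hmoment
  rw [one_div, ENNReal.rpow_inv_le_iff hk0, ENNReal.ofReal_rpow_of_nonneg (by positivity) hk0.le]
  exact hmoment.trans (ENNReal.ofReal_le_ofReal
    (Real.mul_rpow_mul_Gamma_mul_add_one_le_rpow one_le_two hK hθ hk))

theorem tail_implies_moments {Ω : Type*} [MeasurableSpace Ω] (μ : Measure Ω)
    [IsProbabilityMeasure μ] (X : Ω → ℝ) (hX : Measurable X)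
    (K θ : ℝ) (hK : 0 < K) (hθ : 0 < θ)
    (h : ∀ x : ℝ, 0 ≤ x → μ {ω | x ≤ |X ω|} ≤ ENNReal.ofReal (2 * Real.exp (-(x / K) ^ (1 / θ)))) :
    ∃ C : ℝ, 0 < C ∧ ∀ k : ℝ, 1 ≤ k →
      (∫⁻ ω, ENNReal.ofReal (|X ω| ^ k) ∂μ) ^ (1 / k) ≤ ENNReal.ofReal (C * k ^ θ) :=
  tail_implies_moments_general μ X hX K θ hK hθ h
end

section
/- Let X₁, …, X_n be identically distributed random variables with (E[|X_i|^k])^{1/k} ≤ K·k^θ for all k ≥ 1, where K > 0 and θ > 0. Set K_θ = e·K. Then for all x ≥ n·K_θ, P(|X₁ + ⋯ + X_n| ≥ x) ≤ exp(−(x/(n·K_θ))^{1/θ}). -/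
open MeasureTheory Real ProbabilityTheory

/-!
Minkowski's inequality bounds the `p`-th moment of the sum by `n K p^θ`, and Markov's inequality
at the moment `p` gives `P(|S| ≥ x) ≤ (n K p^θ / x)^p`. Choosing `p = (x / (e n K))^(1/θ)`, which is
at least `1` exactly when `x ≥ e n K`, makes the base equal to `1/e`, so the bound is `exp (-p)`.
-/

section

variable {Ω : Type*} [MeasurableSpace Ω] {μ : Measure Ω}

theorem eLpNorm_ofReal_eq_lintegral_abs_rpow {f : Ω → ℝ} {p : ℝ} (hp : 0 < p) :
    eLpNorm f (ENNReal.ofReal p) μ = (∫⁻ ω, ENNReal.ofReal (|f ω| ^ p) ∂μ) ^ (1 / p) := by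
  rw [eLpNorm_eq_lintegral_rpow_enorm_toReal (by simpa using hp) ENNReal.ofReal_ne_top,
    ENNReal.toReal_ofReal hp.le]
  simp_rw [← ofReal_norm, Real.norm_eq_abs, ENNReal.ofReal_rpow_of_nonneg (abs_nonneg _) hp.le]

theorem eLpNorm_sum_le_card_mul {E ι : Type*} [NormedAddCommGroup E] {s : Finset ι}
    {f : ι → Ω → E} (hf : ∀ i ∈ s, AEStronglyMeasurable (f i) μ) {p : ENNReal} (hp : 1 ≤ p)
    {B : ENNReal} (hB : ∀ i ∈ s, eLpNorm (f i) p μ ≤ B) :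
    eLpNorm (∑ i ∈ s, f i) p μ ≤ s.card * B :=
  calc eLpNorm (∑ i ∈ s, f i) p μ ≤ ∑ i ∈ s, eLpNorm (f i) p μ := eLpNorm_sum_le hf hp
    _ ≤ s.card * B := by simpa using Finset.sum_le_card_nsmul s _ B hB

theorem meas_le_abs_le_of_eLpNorm_le {f : Ω → ℝ} (hf : AEStronglyMeasurable f μ) {p x M : ℝ}
    (hp : 0 < p) (hx : 0 < x) (hM : 0 ≤ M)
    (hfM : eLpNorm f (ENNReal.ofReal p) μ ≤ ENNReal.ofReal M) :
    μ {ω | x ≤ |f ω|} ≤ ENNReal.ofReal ((M / x) ^ p) := by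
  have hset : {ω | x ≤ |f ω|} = {ω | ENNReal.ofReal x ≤ ‖f ω‖ₑ} := by
    ext ω
    change x ≤ |f ω| ↔ _ ≤ ‖f ω‖ₑ
    rw [← ofReal_norm, Real.norm_eq_abs, ENNReal.ofReal_le_ofReal_iff (abs_nonneg _)]
  rw [hset]
  calc μ {ω | ENNReal.ofReal x ≤ ‖f ω‖ₑ}
      ≤ (ENNReal.ofReal x)⁻¹ ^ p * eLpNorm f (ENNReal.ofReal p) μ ^ p := by
        have := meas_ge_le_mul_pow_eLpNorm_enorm μ (ENNReal.ofReal_pos.mpr hp).ne'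
          ENNReal.ofReal_ne_top hf (ENNReal.ofReal_pos.mpr hx).ne' (by simp)
        rwa [ENNReal.toReal_ofReal hp.le] at this
    _ ≤ (ENNReal.ofReal x)⁻¹ ^ p * ENNReal.ofReal M ^ p := by gcongr
    _ = ENNReal.ofReal ((M / x) ^ p) := by
        rw [← ENNReal.ofReal_inv_of_pos hx, ← ENNReal.mul_rpow_of_nonneg _ _ hp.le,
          ← ENNReal.ofReal_mul (by positivity), ENNReal.ofReal_rpow_of_nonneg (by positivity) hp.le,
          inv_mul_eq_div]

theorem meas_le_abs_le_exp_of_eLpNorm_le_mul_rpow {f : Ω → ℝ} (hf : AEStronglyMeasurable f μ)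
    {L θ : ℝ} (hL : 0 < L) (hθ : 0 < θ)
    (hmom : ∀ p : ℝ, 1 ≤ p → eLpNorm f (ENNReal.ofReal p) μ ≤ ENNReal.ofReal (L * p ^ θ))
    {x : ℝ} (hx : exp 1 * L ≤ x) :
    μ {ω | x ≤ |f ω|} ≤ ENNReal.ofReal (exp (-(x / (exp 1 * L)) ^ (1 / θ))) := by
  set p := (x / (exp 1 * L)) ^ (1 / θ)
  have hx0 : 0 < x := lt_of_lt_of_le (by positivity) hx
  have hp : 1 ≤ p := one_le_rpow ((one_le_div (by positivity)).mpr hx) (by positivity)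
  have hpθ : L * p ^ θ = x / exp 1 := by
    rw [← rpow_mul (by positivity), one_div_mul_cancel hθ.ne', rpow_one]
    field_simp
  calc μ {ω | x ≤ |f ω|} ≤ ENNReal.ofReal ((x / exp 1 / x) ^ p) :=
        meas_le_abs_le_of_eLpNorm_le hf (by linarith) hx0 (by positivity) (hpθ ▸ hmom p hp)
    _ = ENNReal.ofReal (exp (-p)) := by
        rw [div_div_cancel_left' hx0.ne', ← exp_neg, ← exp_mul, neg_one_mul]

end

theorem subWeibull_sum_concentration_general {Ω : Type*} [MeasurableSpace Ω] (μ : Measure Ω)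
    [IsProbabilityMeasure μ] (n : ℕ) (X : Fin n → Ω → ℝ) (hX : ∀ i, Measurable (X i))
    (K θ : ℝ) (hK : 0 < K) (hθ : 0 < θ)
    (h : ∀ i, ∀ k : ℝ, 1 ≤ k →
      (∫⁻ ω, ENNReal.ofReal (|X i ω| ^ k) ∂μ) ^ (1 / k) ≤ ENNReal.ofReal (K * k ^ θ)) :
    ∀ x : ℝ, (n : ℝ) * (Real.exp 1 * K) ≤ x →
      μ {ω | x ≤ |∑ i, X i ω|} ≤
        ENNReal.ofReal (Real.exp (-(x / ((n : ℝ) * (Real.exp 1 * K))) ^ (1 / θ))) := by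
  intro x hx
  rcases Nat.eq_zero_or_pos n with rfl | hn
  · simp [zero_rpow (inv_pos.mpr hθ).ne', prob_le_one]
  have hsum : ∀ p : ℝ, 1 ≤ p → eLpNorm (fun ω ↦ ∑ i, X i ω) (ENNReal.ofReal p) μ ≤
      ENNReal.ofReal (n * K * p ^ θ) := by
    intro p hp
    have hXp : ∀ i ∈ Finset.univ, eLpNorm (X i) (ENNReal.ofReal p) μ ≤ ENNReal.ofReal (K * p ^ θ) :=
      fun i _ ↦ (eLpNorm_ofReal_eq_lintegral_abs_rpow (by linarith)).trans_le (h i p hp)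
    calc eLpNorm (fun ω ↦ ∑ i, X i ω) (ENNReal.ofReal p) μ
        = eLpNorm (∑ i, X i) (ENNReal.ofReal p) μ := by simp only [Finset.sum_fn]
      _ ≤ n * ENNReal.ofReal (K * p ^ θ) := by
        simpa using eLpNorm_sum_le_card_mul (fun i _ ↦ (hX i).aestronglyMeasurable)
          (by simpa using hp) hXp
      _ = ENNReal.ofReal (n * K * p ^ θ) := by
        rw [mul_assoc, ENNReal.ofReal_mul (Nat.cast_nonneg n), ENNReal.ofReal_natCast]
  have htail := meas_le_abs_le_exp_of_eLpNorm_le_mul_rpow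
    (Finset.measurable_sum _ fun i _ ↦ hX i).aestronglyMeasurable (by positivity) hθ hsum
    (x := x) (by linarith)
  rwa [show exp 1 * (n * K) = n * (exp 1 * K) by ring] at htail

theorem subWeibull_sum_concentration {Ω : Type*} [MeasurableSpace Ω] (μ : Measure Ω)
    [IsProbabilityMeasure μ] (n : ℕ) (X : Fin n → Ω → ℝ) (hX : ∀ i, Measurable (X i))
    (K θ : ℝ) (hK : 0 < K) (hθ : 0 < θ)
    (hid : ∀ i j, IdentDistrib (X i) (X j) μ μ)
    (h : ∀ i, ∀ k : ℝ, 1 ≤ k →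
      (∫⁻ ω, ENNReal.ofReal (|X i ω| ^ k) ∂μ) ^ (1 / k) ≤ ENNReal.ofReal (K * k ^ θ)) :
    ∀ x : ℝ, (n : ℝ) * (Real.exp 1 * K) ≤ x →
      μ {ω | x ≤ |∑ i, X i ω|} ≤
        ENNReal.ofReal (Real.exp (-(x / ((n : ℝ) * (Real.exp 1 * K))) ^ (1 / θ))) :=
  subWeibull_sum_concentration_general μ n X hX K θ hK hθ h
end
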